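/- arXiv:1910.04585 — 8 statements merged into one kernel-verified Lean document; each statement's English description precedes it below -/
import Mathlib

section
/- Fix d ≥ 1. Let a ∈ ℝ^d and let v_1, …, v_d ∈ ℝ^d be linearly independent; for each j ∈ {1,…,d} let μ_{j,-} = a + (1/2)Σ_{k≠j} v_k and μ_{j,+} = a + v_j + (1/2)Σ_{k≠j} v_k be the barycenters of the two opposite facets of the d-parallelotope with base point a and edge vectors v_1,…,v_d. Suppose real numbers u_{j,-}, u_{j,+} (1 ≤ j ≤ d) are given and satisfy u_{1,-} + u_{1,+} = u_{2,-} + u_{2,+} = ⋯ = u_{d,-} + u_{d,+}. Then there exists a unique affine function u : ℝ^d → ℝ such that u(μ_{j,-}) = u_{j,-} and u(μ_{j,+}) = u_{j,+} for all j = 1,…,d. -/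
/-- An affine (P₁) function on `ℝ^d`. -/
def IsAffine {d : ℕ} (u : (Fin d → ℝ) → ℝ) : Prop :=
  ∃ (ℓ : (Fin d → ℝ) →ₗ[ℝ] ℝ) (b : ℝ), ∀ x, u x = ℓ x + b

/-- Converse direction of Lemma 3.2: if values `um j, up j` at the facet
barycenters `μm j, μp j` of a `d`-parallelotope satisfy
`um 1 + up 1 = ⋯ = um d + up d`, then there exists a unique affine function
`u : ℝ^d → ℝ` with `u (μm j) = um j` and `u (μp j) = up j` for all `j`. -/
theorem stmt_3 (d : ℕ) (hd : 1 ≤ d) (a : Fin d → ℝ) (v : Fin d → (Fin d → ℝ))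
    (hv : LinearIndependent ℝ v)
    (μm μp : Fin d → (Fin d → ℝ))
    (hμm : ∀ j, μm j = a + (1 / 2 : ℝ) • ∑ k ∈ Finset.univ \ {j}, v k)
    (hμp : ∀ j, μp j = a + v j + (1 / 2 : ℝ) • ∑ k ∈ Finset.univ \ {j}, v k)
    (um up : Fin d → ℝ)
    (hconstraint : ∀ i j, um i + up i = um j + up j) :
    ∃! u : (Fin d → ℝ) → ℝ,
      IsAffine u ∧ ∀ j, u (μm j) = um j ∧ u (μp j) = up j := by
  classical
  haveI : Nonempty (Fin d) := ⟨⟨0, hd⟩⟩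
  have hcard : Fintype.card (Fin d) = Module.finrank ℝ (Fin d → ℝ) := by simp
  let B := basisOfLinearIndependentOfCardEqFinrank hv hcard
  have hB : ∀ j, B j = v j := fun j => by
    simp [B, coe_basisOfLinearIndependentOfCardEqFinrank]
  set g : Fin d → ℝ := fun k => up k - um k with hg
  let ℓ : (Fin d → ℝ) →ₗ[ℝ] ℝ := B.constr ℝ g
  have hℓv : ∀ j, ℓ (v j) = g j := fun j => by
    rw [← hB]; exact B.constr_basis ℝ g j
  set T : ℝ := ∑ k, g k with hT
  have j0 : Fin d := ⟨0, hd⟩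
  set c : ℝ := (um j0 + up j0) / 2 with hc
  set b : ℝ := c - ℓ a - T / 2 with hb
  have hμmv : ∀ j, μp j = μm j + v j := fun j => by
    rw [hμm, hμp]; abel
  -- value of ℓ at μm j
  have hℓμm : ∀ j, ℓ (μm j) = ℓ a + (T - g j) / 2 := by
    intro j
    have hsum : ∑ k ∈ Finset.univ \ {j}, g k = T - g j := by
      rw [hT, Finset.sum_sdiff_eq_sub (Finset.subset_univ {j})]
      simp
    rw [hμm, map_add, map_smul, map_sum]
    simp only [hℓv, hsum, smul_eq_mul]
    ring
  have hcj : ∀ j, (um j + up j) / 2 = c := fun j => by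
    rw [hc, hconstraint j j0]
  refine ⟨fun x => ℓ x + b, ⟨⟨ℓ, b, fun x => rfl⟩, ?_⟩, ?_⟩
  · intro j
    have h1 : ℓ (μm j) + b = um j := by
      rw [hℓμm j, hb, ← hcj j, hg]
      ring
    refine ⟨h1, ?_⟩
    show ℓ (μp j) + b = up j
    have : ℓ (μp j) = ℓ (μm j) + g j := by
      rw [hμmv j, map_add, hℓv]
    rw [this]
    have := hcj j
    rw [hℓμm j, hb, ← hcj j, hg]
    ring
  · rintro u' ⟨⟨ℓ', b', hu'⟩, hval⟩
    have hℓ'v : ∀ j, ℓ' (v j) = g j := by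
      intro j
      have h1 : ℓ' (μp j) + b' = up j := by rw [← hu']; exact (hval j).2
      have h2 : ℓ' (μm j) + b' = um j := by rw [← hu']; exact (hval j).1
      have h3 : ℓ' (μp j) = ℓ' (μm j) + ℓ' (v j) := by rw [hμmv j, map_add]
      rw [hg]; simp only [← h1, ← h2, h3]; ring
    have hℓeq : ℓ' = ℓ := by
      apply B.ext
      intro j
      rw [hB, hℓ'v, hℓv]
    have hbeq : b' = b := by
      have h2 : ℓ' (μm j0) + b' = um j0 := by rw [← hu']; exact (hval j0).1
      have h2' : ℓ (μm j0) + b = um j0 := by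
        rw [hℓμm j0, hb, ← hcj j0, hg]; ring
      rw [hℓeq] at h2
      linarith
    funext x
    rw [hu' x, hℓeq, hbeq]
end

section
/- Fix d ≥ 1. Let a ∈ ℝ^d and let v_1, …, v_d ∈ ℝ^d be linearly independent; for each j ∈ {1,…,d} let μ_{j,-} = a + (1/2)Σ_{k≠j} v_k and μ_{j,+} = a + v_j + (1/2)Σ_{k≠j} v_k be the barycenters of the two opposite facets of the d-parallelotope with base point a and edge vectors v_1,…,v_d. Choose signs s_1, …, s_d ∈ {+,-} and set μ_j = μ_{j,s_j} for j = 1,…,d; fix any index j₀ ∈ {1,…,d} and set μ_{d+1} = μ_{j₀,-s_{j₀}} (the barycenter of the facet opposite to F_{j₀,s_{j₀}}). Then the evaluation map u ↦ (u(μ_1), u(μ_2), …, u(μ_{d+1})) from the space of affine functions ℝ^d → ℝ to ℝ^{d+1} is a bijection; that is, the d-dimensional P_1-nonconforming polyhedral finite element with degrees of freedom given by point values at μ_1, …, μ_{d+1} is unisolvent. -/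
/-- Unisolvency of the `d`-dimensional P₁-nonconforming polyhedral element:
with `μ j true = μp j` and `μ j false = μm j` the facet barycenters, for any
choice of signs `s : Fin d → Bool` and any extra index `j₀`, the evaluation
map at the `d+1` nodes `μ 1 (s 1), …, μ d (s d), μ j₀ (!s j₀)` is a bijection
from the space of affine functions onto `ℝ^(d+1)`. -/
theorem stmt_4 (d : ℕ) (hd : 1 ≤ d) (a : Fin d → ℝ) (v : Fin d → (Fin d → ℝ))
    (hv : LinearIndependent ℝ v)
    (μ : Fin d → Bool → (Fin d → ℝ))
    (hμm : ∀ j, μ j false = a + (1 / 2 : ℝ) • ∑ k ∈ Finset.univ \ {j}, v k)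
    (hμp : ∀ j, μ j true = a + v j + (1 / 2 : ℝ) • ∑ k ∈ Finset.univ \ {j}, v k)
    (s : Fin d → Bool) (j₀ : Fin d)
    (pts : Fin (d + 1) → (Fin d → ℝ))
    (hpts : ∀ j : Fin d, pts j.castSucc = μ j (s j))
    (hlast : pts (Fin.last d) = μ j₀ (!s j₀)) :
    Function.Bijective
      (fun u : {u : (Fin d → ℝ) → ℝ // IsAffine u} =>
        fun i : Fin (d + 1) => u.1 (pts i)) := by
  classical
  haveI : Nonempty (Fin d) := ⟨⟨0, hd⟩⟩
  have hcard : Fintype.card (Fin d) = Module.finrank ℝ (Fin d → ℝ) := by simp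
  let B : Module.Basis (Fin d) ℝ (Fin d → ℝ) := basisOfLinearIndependentOfCardEqFinrank hv hcard
  have hB : ∀ j, B j = v j := fun j =>
    congrFun (coe_basisOfLinearIndependentOfCardEqFinrank hv hcard) j
  set σ : Fin d → ℝ := fun j => if s j then 1 else -1 with hσdef
  have hσ : ∀ j, σ j * σ j = 1 := by
    intro j; simp only [hσdef]; cases s j <;> norm_num
  have hsum : ∀ j : Fin d, ∑ k ∈ Finset.univ \ {j}, v k = (∑ k, v k) - v j := by
    intro j
    rw [Finset.sum_sdiff_eq_sub (Finset.subset_univ {j}), Finset.sum_singleton]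
  set m : Fin d → ℝ := a + (1 / 2 : ℝ) • ∑ k, v k with hm
  have hpt : ∀ j, pts j.castSucc = m + (σ j / 2) • v j := by
    intro j
    rw [hpts]
    cases hs : s j
    · have hσv : σ j = -1 := by simp [hσdef, hs]
      rw [hμm, hsum, hm, hσv]; module
    · have hσv : σ j = 1 := by simp [hσdef, hs]
      rw [hμp, hsum, hm, hσv]; module
  have hlast' : pts (Fin.last d) = m - (σ j₀ / 2) • v j₀ := by
    rw [hlast]
    cases hs : s j₀
    · have hσv : σ j₀ = -1 := by simp [hσdef, hs]
      simp only [hs, Bool.not_false]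
      rw [hμp, hsum, hm, hσv]; module
    · have hσv : σ j₀ = 1 := by simp [hσdef, hs]
      simp only [hs, Bool.not_true]
      rw [hμm, hsum, hm, hσv]; module
  have heval : ∀ (ℓ : (Fin d → ℝ) →ₗ[ℝ] ℝ) (j : Fin d),
      ℓ (pts j.castSucc) = ℓ m + (σ j / 2) * ℓ (v j) := by
    intro ℓ j
    rw [hpt j, map_add, map_smul, smul_eq_mul]
  have hevall : ∀ (ℓ : (Fin d → ℝ) →ₗ[ℝ] ℝ),
      ℓ (pts (Fin.last d)) = ℓ m - (σ j₀ / 2) * ℓ (v j₀) := by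
    intro ℓ
    rw [hlast', map_sub, map_smul, smul_eq_mul]
  have hσne : ∀ j, σ j ≠ 0 := by
    intro j; simp only [hσdef]; cases s j <;> norm_num
  constructor
  · rintro ⟨u, hu⟩ ⟨u', hu'⟩ h
    obtain ⟨ℓ, b, hub⟩ := hu
    obtain ⟨ℓ', b', hub'⟩ := hu'
    have hh : ∀ i, ℓ (pts i) + b = ℓ' (pts i) + b' := by
      intro i
      have := congrFun h i
      simp only at this
      rw [hub, hub'] at this
      exact this
    have hc : ∀ j : Fin d,
        (ℓ m + b) + (σ j / 2) * ℓ (v j) = (ℓ' m + b') + (σ j / 2) * ℓ' (v j) := by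
      intro j
      have := hh j.castSucc
      rw [heval ℓ j, heval ℓ' j] at this
      linarith
    have hcl : (ℓ m + b) - (σ j₀ / 2) * ℓ (v j₀) = (ℓ' m + b') - (σ j₀ / 2) * ℓ' (v j₀) := by
      have := hh (Fin.last d)
      rw [hevall ℓ, hevall ℓ'] at this
      linarith
    have hc0 : ℓ m + b = ℓ' m + b' := by
      have h1 := hc j₀
      linarith
    have he : ∀ j, ℓ (v j) = ℓ' (v j) := by
      intro j
      have h1 := hc j
      have h2 : (σ j / 2) * (ℓ (v j) - ℓ' (v j)) = 0 := by linarith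
      have h3 : σ j / 2 ≠ 0 := by
        have := hσne j; positivity
      have := mul_eq_zero.mp h2
      rcases this with h | h
      · exact absurd h h3
      · linarith
    have hℓeq : ℓ = ℓ' := by
      apply B.ext
      intro j
      rw [hB j]
      exact he j
    have hbeq : b = b' := by
      rw [hℓeq] at hc0; linarith
    apply Subtype.ext
    funext x
    show u x = u' x
    rw [hub, hub', hℓeq, hbeq]
  · intro y
    set A : ℝ := (y j₀.castSucc + y (Fin.last d)) / 2 with hA
    set ℓ : (Fin d → ℝ) →ₗ[ℝ] ℝ :=
      B.constr ℝ (fun j => 2 * σ j * (y j.castSucc - A)) with hℓdef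
    have hℓ : ∀ j, ℓ (v j) = 2 * σ j * (y j.castSucc - A) := by
      intro j
      rw [hℓdef, ← hB j]
      exact B.constr_basis ℝ _ j
    have hA2 : 2 * A = y j₀.castSucc + y (Fin.last d) := by rw [hA]; ring
    refine ⟨⟨fun x => ℓ x + (A - ℓ m), ℓ, A - ℓ m, fun x => rfl⟩, ?_⟩
    funext i
    induction i using Fin.lastCases with
    | last =>
      simp only
      rw [hevall ℓ, hℓ j₀]
      linear_combination (A - y j₀.castSucc) * hσ j₀ + hA2
    | cast j =>
      simp only
      rw [heval ℓ j, hℓ j]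
      linear_combination (y j.castSucc - A) * hσ j
end

section
/- Fix d ≥ 1. Let a ∈ ℝ^d and let v_1, …, v_d ∈ ℝ^d be linearly independent; for each j ∈ {1,…,d} let μ_{j,-} = a + (1/2)Σ_{k≠j} v_k and μ_{j,+} = a + v_j + (1/2)Σ_{k≠j} v_k be the barycenters of the two opposite facets of the d-parallelotope with base point a and edge vectors v_1,…,v_d. Choose signs s_1, …, s_d ∈ {+,-} and fix any index j₀ ∈ {1,…,d}. Then the d+1 points μ_{1,s_1}, μ_{2,s_2}, …, μ_{d,s_d}, μ_{j₀,-s_{j₀}} are affinely independent. -/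
/-- The `d+1` nodes of the P₁-nonconforming polyhedral element — one facet
barycenter chosen from each of the `d` opposite pairs, plus the barycenter of
the facet opposite to the `j₀`-th chosen one — are affinely independent.
Here `μ j true = μp j` and `μ j false = μm j`. -/
theorem stmt_6 (d : ℕ) (hd : 1 ≤ d) (a : Fin d → ℝ) (v : Fin d → (Fin d → ℝ))
    (hv : LinearIndependent ℝ v)
    (μ : Fin d → Bool → (Fin d → ℝ))
    (hμm : ∀ j, μ j false = a + (1 / 2 : ℝ) • ∑ k ∈ Finset.univ \ {j}, v k)
    (hμp : ∀ j, μ j true = a + v j + (1 / 2 : ℝ) • ∑ k ∈ Finset.univ \ {j}, v k)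
    (s : Fin d → Bool) (j₀ : Fin d) :
    AffineIndependent ℝ
      (Fin.snoc (fun j => μ j (s j)) (μ j₀ (!s j₀)) : Fin (d + 1) → (Fin d → ℝ)) := by
  set ε : Fin d → ℝ := fun j => if s j then 1 else -1 with hε
  have hεne : ∀ j, ε j ≠ 0 := by
    intro j; simp only [hε]; split <;> norm_num
  set C : Fin d → ℝ := a + (1/2 : ℝ) • ∑ k, v k with hC
  have hμ : ∀ j (b : Bool), μ j b = C + (((if b then (1:ℝ) else -1))/2) • v j := by
    intro j b
    have hs : ∑ k ∈ Finset.univ \ {j}, v k = (∑ k, v k) - v j := by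
      rw [Finset.sum_sdiff_eq_sub (Finset.subset_univ _)]
      simp
    cases b
    · have h : ((if (false:Bool) = true then (1:ℝ) else -1)) = -1 := by norm_num
      rw [hμm j, hs, hC, h]; module
    · have h : ((if (true:Bool) = true then (1:ℝ) else -1)) = 1 := by norm_num
      rw [hμp j, hs, hC, h]; module
  set u : Fin d → (Fin d → ℝ) := fun j => (ε j / 2) • v j + (ε j₀ / 2) • v j₀ with hu_def
  have hu : LinearIndependent ℝ u := by
    rw [Fintype.linearIndependent_iff]
    intro g hg
    have key : ∑ j, (g j * (ε j / 2) + (if j = j₀ then (∑ k, g k) * (ε j₀ / 2) else 0)) • v j = 0 := by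
      have : ∑ j, (g j * (ε j / 2) + (if j = j₀ then (∑ k, g k) * (ε j₀ / 2) else 0)) • v j
          = ∑ j, g j • u j := by
        rw [hu_def]
        simp only [add_smul, smul_add, Finset.sum_add_distrib]
        congr 1
        · apply Finset.sum_congr rfl; intro j _; rw [smul_smul]
        · simp only [ite_smul, zero_smul, Finset.sum_ite_eq', Finset.mem_univ, if_true,
            smul_smul, ← Finset.sum_smul, Finset.sum_mul]
      rw [this, hg]
    have hcoef := Fintype.linearIndependent_iff.mp hv _ key
    have hne : ∀ j, j ≠ j₀ → g j = 0 := by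
      intro j hj
      have h := hcoef j
      rw [if_neg hj, add_zero] at h
      rcases mul_eq_zero.mp h with h4 | h4
      · exact h4
      · exact absurd h4 (div_ne_zero (hεne j) two_ne_zero)
    intro j
    by_cases hj : j = j₀
    · subst hj
      have hsum : ∑ k, g k = g j := by
        apply Finset.sum_eq_single
        · intro b _ hb; exact hne b hb
        · simp
      have h := hcoef j
      rw [if_pos rfl, hsum] at h
      have h3 : g j * (ε j / 2) = 0 := by linarith
      rcases mul_eq_zero.mp h3 with h4 | h4
      · exact h4
      · exact absurd h4 (div_ne_zero (hεne j) two_ne_zero)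
    · exact hne j hj
  rw [affineIndependent_iff_linearIndependent_vsub ℝ _ (Fin.last d)]
  have heq : (fun i : {x : Fin (d+1) // x ≠ Fin.last d} =>
        (Fin.snoc (fun j => μ j (s j)) (μ j₀ (!s j₀)) : Fin (d + 1) → (Fin d → ℝ)) i
          -ᵥ (Fin.snoc (fun j => μ j (s j)) (μ j₀ (!s j₀)) : Fin (d + 1) → (Fin d → ℝ)) (Fin.last d))
      = u ∘ (fun i : {x : Fin (d+1) // x ≠ Fin.last d} => (i : Fin (d+1)).castPred i.prop) := by
    funext i
    obtain ⟨i, hi⟩ := i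
    obtain ⟨j, rfl⟩ : ∃ j : Fin d, j.castSucc = i := ⟨i.castPred hi, Fin.castSucc_castPred _ _⟩
    simp only [Function.comp_apply, Fin.snoc_castSucc, Fin.snoc_last, Fin.castPred_castSucc]
    rw [hμ j (s j), hμ j₀ (!s j₀)]
    have h1 : ((if s j then (1:ℝ) else -1)) = ε j := rfl
    have h2 : ((if !s j₀ then (1:ℝ) else -1)) = -ε j₀ := by
      simp only [hε]; cases s j₀ <;> simp
    rw [h1, h2, hu_def]
    simp only [vsub_eq_sub]
    module
  rw [heq]
  apply hu.comp
  intro i i' h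
  apply Subtype.ext
  have h2 := congrArg Fin.castSucc h
  simpa only [Fin.castSucc_castPred] using h2
end

section
/- Let d ≥ 1 and let K ⊆ ℝ^d be a nonempty, bounded, open, convex set. Then the set of extreme points of the closure of K is finite if and only if K is the intersection of a finite family of open half-spaces of ℝ^d, i.e., K = ∩_{i=1}^{m} {x ∈ ℝ^d : f_i(x) < c_i} for some finitely many nonzero linear functionals f_i : ℝ^d → ℝ and real numbers c_i. -/
open Set Filter Topology

lemma mem_openSegment_self_ray {E : Type*} [AddCommGroup E] [Module ℝ E]
    (x y : E) {ε : ℝ} (hε : 0 < ε) :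
    x ∈ openSegment ℝ y (x + ε • (x - y)) := by
  have h1 : (0:ℝ) < 1 + ε := by linarith
  refine ⟨ε / (1 + ε), 1 / (1 + ε), by positivity, by positivity, by field_simp; ring, ?_⟩
  match_scalars <;> field_simp <;> ring

lemma open_convex_eq_interior_closure {E : Type*} [NormedAddCommGroup E] [NormedSpace ℝ E]
    {K : Set E} (hne : K.Nonempty) (hopen : IsOpen K) (hconv : Convex ℝ K) :
    K = interior (closure K) := by
  refine subset_antisymm ?_ ?_
  · exact interior_maximal subset_closure hopen
  · intro x hx
    obtain ⟨y, hy⟩ := hne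
    have hy' : y ∈ interior K := hopen.interior_eq.symm ▸ hy
    have hz : ∀ᶠ (t : ℝ) in 𝓝[>] 0, x + t • (x - y) ∈ interior (closure K) := by
      have hcont : Tendsto (fun t : ℝ => x + t • (x - y)) (𝓝[>] 0) (𝓝 x) := by
        have : Tendsto (fun t : ℝ => x + t • (x - y)) (𝓝 0) (𝓝 (x + (0:ℝ) • (x - y))) :=
          (tendsto_id.smul_const _).const_add _
        simpa using this.mono_left nhdsWithin_le_nhds
      exact hcont.eventually (isOpen_interior.mem_nhds hx)
    obtain ⟨t, hmem, ht⟩ := (hz.and self_mem_nhdsWithin).exists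
    have hseg := mem_openSegment_self_ray x y ht
    have := hconv.openSegment_interior_closure_subset_interior hy' (interior_subset hmem) hseg
    rwa [hopen.interior_eq] at this

lemma extremePoints_polyhedron_finite {E : Type*} [AddCommGroup E] [Module ℝ E]
    {ι : Type*} [Finite ι] (f : ι → E →ₗ[ℝ] ℝ) (c : ι → ℝ) :
    (Set.extremePoints ℝ (⋂ i, {x | f i x ≤ c i})).Finite := by
  classical
  set P := ⋂ i, {x | f i x ≤ c i} with hP
  have key : Set.InjOn (fun x => {i | f i x = c i}) (Set.extremePoints ℝ P) := by
    intro x hx y hy hxy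
    have hxP : x ∈ P := hx.1
    have hyP : y ∈ P := hy.1
    have hxy' : {i | f i x = c i} = {i | f i y = c i} := hxy
    have htight : ∀ i, f i x = c i ↔ f i y = c i := fun i => Set.ext_iff.mp hxy' i
    have h1 : ∀ᶠ ε in 𝓝[>] (0:ℝ), ∀ i, f i x + ε * (f i x - f i y) ≤ c i := by
      rw [eventually_all]
      intro i
      by_cases hi : f i x = c i
      · have hyi : f i y = c i := (htight i).mp hi
        filter_upwards with ε
        rw [hi, hyi]
        simp
      · have hlt : f i x < c i := lt_of_le_of_ne (by exact Set.mem_iInter.mp hxP i) hi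
        have htd : Tendsto (fun ε : ℝ => f i x + ε * (f i x - f i y)) (𝓝[>] 0) (𝓝 (f i x)) := by
          have : Tendsto (fun ε : ℝ => f i x + ε * (f i x - f i y)) (𝓝 0)
              (𝓝 (f i x + 0 * (f i x - f i y))) := (tendsto_id.mul_const _).const_add _
          simpa using this.mono_left nhdsWithin_le_nhds
        exact (htd.eventually_lt_const hlt).mono fun ε h => h.le
    obtain ⟨ε, hεle, hε0⟩ := (h1.and self_mem_nhdsWithin).exists
    have hzP : x + ε • (x - y) ∈ P := by
      rw [hP, Set.mem_iInter]
      intro i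
      have := hεle i
      simpa [map_add, map_smul, map_sub, smul_eq_mul, mul_sub] using this
    have hseg := mem_openSegment_self_ray x y hε0
    exact ((mem_extremePoints.mp hx).2 y hyP _ hzP hseg).1.symm
  exact Set.Finite.of_finite_image (Set.toFinite _) key

lemma forward_dir {E : Type*} [NormedAddCommGroup E] [NormedSpace ℝ E]
    [FiniteDimensional ℝ E] (K : Set E)
    (hne : K.Nonempty) (hbdd : Bornology.IsBounded K) (hopen : IsOpen K)
    (hconv : Convex ℝ K) (hfin : (Set.extremePoints ℝ (closure K)).Finite) :
    ∃ (m : ℕ) (f : Fin m → (E →ₗ[ℝ] ℝ)) (c : Fin m → ℝ),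
      (∀ i, f i ≠ 0) ∧ K = ⋂ i, {x | f i x < c i} := by
  classical
  obtain ⟨x0, hx0⟩ := hne
  have hCcomp : IsCompact (closure K) := hbdd.isCompact_closure
  have hCconv : Convex ℝ (closure K) := hconv.closure
  have hCeq : convexHull ℝ (Set.extremePoints ℝ (closure K)) = closure K := by
    conv_rhs => rw [← closure_convexHull_extremePoints hCcomp hCconv]
    exact (hfin.isClosed_convexHull (𝕜 := ℝ)).closure_eq.symm
  haveI := hfin.to_subtype
  set S := Set.extremePoints ℝ (closure K) with hS
  set Q : Set (E →L[ℝ] ℝ) := ⋂ s : ↥S, {φ : (E →L[ℝ] ℝ) | φ ((s : E) - x0) ≤ 1} with hQ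
  have hQfin : (Set.extremePoints ℝ Q).Finite := by
    have := extremePoints_polyhedron_finite (ι := ↥S)
      (fun s => (ContinuousLinearMap.apply ℝ ℝ ((s : E) - x0)).toLinearMap) (fun _ => 1)
    simpa [hQ, ContinuousLinearMap.apply_apply] using this
  have hQconv : Convex ℝ Q :=
    convex_iInter fun s => convex_halfSpace_le
      ⟨fun a b => by simp [ContinuousLinearMap.add_apply], fun r a => by simp [ContinuousLinearMap.smul_apply, smul_eq_mul]⟩ 1
  have hQclosed : IsClosed Q :=
    isClosed_iInter fun s =>
      isClosed_le (ContinuousLinearMap.apply ℝ ℝ ((s : E) - x0)).continuous continuous_const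
  have hQsubC : ∀ φ ∈ Q, ∀ y ∈ closure K, φ (y - x0) ≤ 1 := by
    intro φ hφ
    have hsub : closure K ⊆ {y : E | φ (y - x0) ≤ 1} := by
      rw [← hCeq]
      refine convexHull_min (fun s hs => Set.mem_iInter.mp hφ ⟨s, hs⟩) ?_
      have heq : {y : E | φ (y - x0) ≤ 1} = {y : E | φ y ≤ 1 + φ x0} := by
        ext y
        simp only [Set.mem_setOf_eq, map_sub]
        constructor <;> intro <;> linarith
      rw [heq]
      exact convex_halfSpace_le ⟨φ.map_add, φ.map_smul⟩ _
    exact fun y hy => hsub hy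
  obtain ⟨ε, hε, hball⟩ := Metric.isOpen_iff.mp hopen x0 hx0
  have hQbdd : Bornology.IsBounded Q := by
    refine isBounded_iff_forall_norm_le.mpr ⟨2/ε, fun φ hφ => ?_⟩
    have key : ∀ v : E, φ v ≤ 2/ε * ‖v‖ := by
      intro v
      rcases eq_or_ne v 0 with rfl | hv
      · simp
      · have hnv : 0 < ‖v‖ := norm_pos_iff.mpr hv
        have hmemball : x0 + ((ε/2) / ‖v‖) • v ∈ Metric.ball x0 ε := by
          rw [Metric.mem_ball, dist_eq_norm]
          have : x0 + ((ε/2) / ‖v‖) • v - x0 = ((ε/2) / ‖v‖) • v := by abel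
          rw [this, norm_smul, Real.norm_eq_abs, abs_of_pos (by positivity),
            div_mul_cancel₀ _ hnv.ne']
          linarith
        have hmem : x0 + ((ε/2) / ‖v‖) • v ∈ closure K := subset_closure (hball hmemball)
        have h1 := hQsubC φ hφ _ hmem
        have heq : φ (x0 + ((ε/2) / ‖v‖) • v - x0) = ((ε/2) / ‖v‖) * φ v := by
          have : x0 + ((ε/2) / ‖v‖) • v - x0 = ((ε/2) / ‖v‖) • v := by abel
          rw [this, map_smul, smul_eq_mul]
        rw [heq] at h1
        have hpos : 0 < (ε/2) / ‖v‖ := by positivity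
        have h2 : φ v ≤ 1 / ((ε/2) / ‖v‖) := by
          rw [le_div_iff₀ hpos]
          linarith [mul_comm (φ v) ((ε/2) / ‖v‖)]
        calc φ v ≤ 1 / ((ε/2) / ‖v‖) := h2
          _ = 2/ε * ‖v‖ := by field_simp
    refine ContinuousLinearMap.opNorm_le_bound φ (by positivity) fun u => ?_
    rw [Real.norm_eq_abs]
    refine abs_le.mpr ⟨?_, key u⟩
    have := key (-u)
    rw [map_neg, norm_neg] at this
    linarith
  have hQcomp : IsCompact Q := Metric.isCompact_of_isClosed_isBounded hQclosed hQbdd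
  have hQhull : convexHull ℝ (Set.extremePoints ℝ Q) = Q := by
    conv_rhs => rw [← closure_convexHull_extremePoints hQcomp hQconv]
    exact (hQfin.isClosed_convexHull (𝕜 := ℝ)).closure_eq.symm
  have hbipolar : closure K = {x : E | ∀ φ ∈ Q, φ (x - x0) ≤ 1} := by
    refine subset_antisymm (fun y hy φ hφ => hQsubC φ hφ y hy) ?_
    intro x hx
    by_contra hxC
    obtain ⟨g, u, hgu, hux⟩ := geometric_hahn_banach_closed_point hCconv isClosed_closure hxC
    have hx0C : x0 ∈ closure K := subset_closure hx0
    have ht : (0:ℝ) < u - g x0 := sub_pos.mpr (hgu x0 hx0C)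
    set φ : (E →L[ℝ] ℝ) := (u - g x0)⁻¹ • g with hφdef
    have hφQ : φ ∈ Q := by
      rw [hQ, Set.mem_iInter]
      intro s
      have hsC : (s : E) ∈ closure K := extremePoints_subset s.2
      have hgs := hgu _ hsC
      show φ ((s:E) - x0) ≤ 1
      rw [hφdef]
      simp only [ContinuousLinearMap.smul_apply, map_sub, smul_eq_mul]
      rw [← mul_sub, inv_mul_le_iff₀ ht]
      linarith
    have hle := hx φ hφQ
    have hgt : (1:ℝ) < (u - g x0)⁻¹ * (g x - g x0) := by
      rw [show (1:ℝ) = (u - g x0)⁻¹ * (u - g x0) from (inv_mul_cancel₀ ht.ne').symm]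
      exact mul_lt_mul_of_pos_left (by linarith) (inv_pos.mpr ht)
    have hle' : (u - g x0)⁻¹ * (g x - g x0) ≤ 1 := by
      have : φ (x - x0) = (u - g x0)⁻¹ * (g x - g x0) := by
        rw [hφdef]
        simp only [ContinuousLinearMap.smul_apply, map_sub, smul_eq_mul]
        ring
      linarith [hle, this.symm.trans_le hle]
    linarith
  set N : Set (E →L[ℝ] ℝ) := {φ ∈ Set.extremePoints ℝ Q | φ ≠ 0} with hN
  have hNfin : N.Finite := hQfin.subset (Set.sep_subset _ _)
  haveI := hNfin.to_subtype
  have hK2 : K = ⋂ φ : ↥N, {x : E | (φ : E →L[ℝ] ℝ) (x - x0) < 1} := by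
    refine subset_antisymm ?_ ?_
    · intro x hxK
      rw [Set.mem_iInter]
      rintro ⟨φ, hφE, hφ0⟩
      show φ (x - x0) < 1
      have hxC : x ∈ closure K := subset_closure hxK
      have hφQ : φ ∈ Q := extremePoints_subset hφE
      have hle : φ (x - x0) ≤ 1 := hQsubC φ hφQ x hxC
      rcases lt_or_eq_of_le hle with h | h
      · exact h
      exfalso
      obtain ⟨v0, hv0⟩ : ∃ v, φ v ≠ 0 := by
        by_contra hc
        push_neg at hc
        exact hφ0 (ContinuousLinearMap.ext fun v => by simp [hc v])
      set v : E := (φ v0)⁻¹ • v0 with hv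
      have hφv : φ v = 1 := by
        rw [hv, map_smul, smul_eq_mul, inv_mul_cancel₀ hv0]
      have hev : ∀ᶠ t : ℝ in 𝓝[>] 0, x + t • v ∈ K := by
        have hcont : Tendsto (fun t : ℝ => x + t • v) (𝓝[>] 0) (𝓝 x) := by
          have : Tendsto (fun t : ℝ => x + t • v) (𝓝 0) (𝓝 (x + (0:ℝ) • v)) :=
            (tendsto_id.smul_const _).const_add _
          simpa using this.mono_left nhdsWithin_le_nhds
        exact hcont.eventually (hopen.mem_nhds hxK)
      obtain ⟨t, htK, ht0⟩ := (hev.and self_mem_nhdsWithin).exists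
      have hmem : φ (x + t • v - x0) ≤ 1 := hQsubC φ hφQ _ (subset_closure htK)
      have hcalc : φ (x + t • v - x0) = φ (x - x0) + t * φ v := by
        rw [show x + t • v - x0 = (x - x0) + t • v by abel, map_add, map_smul, smul_eq_mul]
      rw [hcalc, h, hφv] at hmem
      have ht0' : 0 < t := ht0
      linarith
    · intro x hx
      have hWopen : IsOpen (⋂ φ : ↥N, {y : E | (φ : E →L[ℝ] ℝ) (y - x0) < 1}) :=
        isOpen_iInter_of_finite fun φ =>
          isOpen_lt ((φ : E →L[ℝ] ℝ).continuous.comp (continuous_id.sub continuous_const))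
            continuous_const
      have hWC : (⋂ φ : ↥N, {y : E | (φ : E →L[ℝ] ℝ) (y - x0) < 1}) ⊆ closure K := by
        intro y hy
        rw [hbipolar]
        intro φ hφQ
        have hmemhull : φ ∈ convexHull ℝ (Set.extremePoints ℝ Q) := hQhull.symm ▸ hφQ
        have hsubset : convexHull ℝ (Set.extremePoints ℝ Q) ⊆ {ψ : E →L[ℝ] ℝ | ψ (y - x0) ≤ 1} := by
          refine convexHull_min ?_ (convex_halfSpace_le ⟨fun a b => by simp [ContinuousLinearMap.add_apply], fun r a => by simp [ContinuousLinearMap.smul_apply, smul_eq_mul]⟩ 1)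
          intro ψ hψ
          by_cases hψ0 : ψ = 0
          · simp [hψ0]
          · have hlt : ψ (y - x0) < 1 := Set.mem_iInter.mp hy ⟨ψ, hψ, hψ0⟩
            exact le_of_lt hlt
        exact hsubset hmemhull
      rw [open_convex_eq_interior_closure ⟨x0, hx0⟩ hopen hconv]
      exact interior_maximal hWC hWopen hx
  haveI : Fintype ↥N := hNfin.fintype
  set e := (Fintype.equivFin ↥N).symm with he
  refine ⟨Fintype.card ↥N, fun i => ((e i : E →L[ℝ] ℝ) : E →ₗ[ℝ] ℝ), fun i => 1 + (e i : E →L[ℝ] ℝ) x0, ?_, ?_⟩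
  · intro i hzero
    exact (e i).2.2 (ContinuousLinearMap.coe_injective (by simpa using hzero))
  · rw [hK2]
    ext x
    simp only [Set.mem_iInter, Set.mem_setOf_eq]
    constructor
    · intro h i
      have := h (e i)
      rw [map_sub] at this
      show ((e i : E →L[ℝ] ℝ) : E →ₗ[ℝ] ℝ) x < 1 + (e i : E →L[ℝ] ℝ) x0
      simp only [ContinuousLinearMap.coe_coe]
      linarith
    · intro h φ
      have := h ((Fintype.equivFin ↥N) φ)
      rw [he, Equiv.symm_apply_apply] at this
      simp only [ContinuousLinearMap.coe_coe] at this
      rw [map_sub]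
      linarith

lemma reverse_dir_closure (d : ℕ) (K : Set (Fin d → ℝ))
    (hne : K.Nonempty)
    (m : ℕ) (f : Fin m → ((Fin d → ℝ) →ₗ[ℝ] ℝ)) (c : Fin m → ℝ)
    (hKeq : K = ⋂ i, {x | f i x < c i}) :
    closure K = ⋂ i, {x | f i x ≤ c i} := by
  have hfc : ∀ i, Continuous (f i) := fun i => (f i).continuous_of_finiteDimensional
  have hPclosed : IsClosed (⋂ i, {x : Fin d → ℝ | f i x ≤ c i}) :=
    isClosed_iInter fun i => isClosed_le (hfc i) continuous_const
  refine subset_antisymm (closure_minimal ?_ hPclosed) ?_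
  · rw [hKeq]
    exact Set.iInter_mono fun i x hx => le_of_lt (a := f i x) hx
  · intro y hy
    obtain ⟨x0, hx0⟩ := hne
    have hx0' := hKeq ▸ hx0
    set z : ℕ → (Fin d → ℝ) := fun n => (1/(n+1:ℝ)) • x0 + (1 - 1/(n+1:ℝ)) • y with hz
    have hzK : ∀ n, z n ∈ K := by
      intro n
      rw [hKeq, Set.mem_iInter]
      intro i
      have ha : (0:ℝ) < 1/(n+1:ℝ) := by positivity
      have ha1 : 1/(n+1:ℝ) ≤ 1 := by
        rw [div_le_one (by positivity)]; linarith [Nat.cast_nonneg (α := ℝ) n]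
      have h1 : f i x0 < c i := Set.mem_iInter.mp hx0' i
      have h2 : f i y ≤ c i := Set.mem_iInter.mp hy i
      have : f i (z n) = (1/(n+1:ℝ)) * f i x0 + (1 - 1/(n+1:ℝ)) * f i y := by
        simp [hz, map_add, map_smul, smul_eq_mul]
      rw [Set.mem_setOf_eq, this]
      have := mul_lt_mul_of_pos_left h1 ha
      have h2' : (1 - 1/(n+1:ℝ)) * f i y ≤ (1 - 1/(n+1:ℝ)) * c i :=
        mul_le_mul_of_nonneg_left h2 (by linarith)
      nlinarith
    have htd : Tendsto z atTop (𝓝 y) := by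
      have h0 : Tendsto (fun n : ℕ => 1/(n+1:ℝ)) atTop (𝓝 0) :=
        tendsto_one_div_add_atTop_nhds_zero_nat
      have := ((h0.smul_const x0).add (((tendsto_const_nhds (x := (1:ℝ))).sub h0).smul_const y))
      simpa [hz, one_div] using this
    exact mem_closure_of_tendsto htd (Eventually.of_forall fun n => hzK n)


/-- Proposition: a nonempty bounded open convex set `K ⊆ ℝ^d` is a polytope
(i.e., the closure of `K` has finitely many extreme points) if and only if
`K` is a bounded polyhedral set (i.e., the intersection of finitely many open
half-spaces `{x : f i x < c i}` with `f i` nonzero linear functionals). -/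
theorem stmt_9 (d : ℕ) (hd : 1 ≤ d) (K : Set (Fin d → ℝ))
    (hne : K.Nonempty) (hbdd : Bornology.IsBounded K) (hopen : IsOpen K)
    (hconv : Convex ℝ K) :
    (Set.extremePoints ℝ (closure K)).Finite ↔
      ∃ (m : ℕ) (f : Fin m → ((Fin d → ℝ) →ₗ[ℝ] ℝ)) (c : Fin m → ℝ),
        (∀ i, f i ≠ 0) ∧ K = ⋂ i, {x | f i x < c i} := by
  constructor
  · intro hfin
    exact forward_dir K hne hbdd hopen hconv hfin
  · rintro ⟨m, f, c, hf0, hKeq⟩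
    rw [reverse_dir_closure d K hne m f c hKeq]
    exact extremePoints_polyhedron_finite f c
end

section
/- Fix d ≥ 1. Let a ∈ ℝ^d and let v_1, …, v_d ∈ ℝ^d be linearly independent, and let V_S = a + Σ_{k∈S} v_k, S ⊆ {1,…,d}, be the vertices of the d-parallelotope K with base point a and edge vectors v_1,…,v_d; for each j ∈ {1,…,d} let μ_{j,-} = a + (1/2)Σ_{k≠j} v_k and μ_{j,+} = a + v_j + (1/2)Σ_{k≠j} v_k be the barycenters of its two opposite facets F_{j,-} and F_{j,+}. Let w : {S : S ⊆ {1,…,d}} → ℝ be any assignment of values to the vertices, and for each j and ι ∈ {+,-} let w_{j,ι} denote the average of w over the vertex set of F_{j,ι}, i.e., w_{j,-} = 2^{-(d-1)} Σ_{S : j∉S} w(S) and w_{j,+} = 2^{-(d-1)} Σ_{S : j∈S} w(S). Then w_{j,-} + w_{j,+} = 2^{-(d-1)} Σ_{S ⊆ {1,…,d}} w(S) for every j (so the sums w_{j,-} + w_{j,+} are equal for all j), and consequently there exists a unique affine function Iw : ℝ^d → ℝ such that (Iw)(μ_{j,ι}) = w_{j,ι} for all j = 1,…,d and ι ∈ {+,-}.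 -/
/-- Well-definedness of the local interpolation operator of the
P₁-nonconforming polyhedral element: for any assignment `w` of values to the
vertices `V S = a + ∑_{k ∈ S} v k` of the `d`-parallelotope, the facet
averages `wm j = 2^{-(d-1)} ∑_{S : j ∉ S} w S` and
`wp j = 2^{-(d-1)} ∑_{S : j ∈ S} w S` satisfy
`wm j + wp j = 2^{-(d-1)} ∑_S w S` for all `j`, and hence there is a unique
affine function `Iw` with `Iw (μm j) = wm j` and `Iw (μp j) = wp j`. -/
theorem stmt_10 (d : ℕ) (hd : 1 ≤ d) (a : Fin d → ℝ) (v : Fin d → (Fin d → ℝ))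
    (hv : LinearIndependent ℝ v)
    (V : Finset (Fin d) → (Fin d → ℝ)) (hV : ∀ S, V S = a + ∑ k ∈ S, v k)
    (μm μp : Fin d → (Fin d → ℝ))
    (hμm : ∀ j, μm j = a + (1 / 2 : ℝ) • ∑ k ∈ Finset.univ \ {j}, v k)
    (hμp : ∀ j, μp j = a + v j + (1 / 2 : ℝ) • ∑ k ∈ Finset.univ \ {j}, v k)
    (w : Finset (Fin d) → ℝ) (wm wp : Fin d → ℝ)
    (hwm : ∀ j, wm j
      = ((2 ^ (d - 1) : ℝ))⁻¹ * ∑ S ∈ Finset.univ.filter (fun S => j ∉ S), w S)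
    (hwp : ∀ j, wp j
      = ((2 ^ (d - 1) : ℝ))⁻¹ * ∑ S ∈ Finset.univ.filter (fun S => j ∈ S), w S) :
    (∀ j, wm j + wp j = ((2 ^ (d - 1) : ℝ))⁻¹ * ∑ S : Finset (Fin d), w S) ∧
    (∃! Iw : (Fin d → ℝ) → ℝ,
      IsAffine Iw ∧ ∀ j, Iw (μm j) = wm j ∧ Iw (μp j) = wp j) := by

  have h1 : ∀ j, wm j + wp j = ((2 ^ (d - 1) : ℝ))⁻¹ * ∑ S : Finset (Fin d), w S := by
    intro j
    rw [hwm, hwp, ← mul_add,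
      ← Finset.sum_filter_add_sum_filter_not Finset.univ (fun S => j ∉ S) w]
    simp [not_not]
  refine ⟨h1, ?_⟩
  haveI : Nonempty (Fin d) := ⟨⟨0, hd⟩⟩
  have hcard : Fintype.card (Fin d) = Module.finrank ℝ (Fin d → ℝ) := by simp
  let B : Module.Basis (Fin d) ℝ (Fin d → ℝ) := basisOfLinearIndependentOfCardEqFinrank hv hcard
  have hB : ∀ j, B j = v j := fun j => congrFun (coe_basisOfLinearIndependentOfCardEqFinrank hv hcard) j
  set T : ℝ := ((2 ^ (d - 1) : ℝ))⁻¹ * ∑ S : Finset (Fin d), w S with hT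
  set ℓ : (Fin d → ℝ) →ₗ[ℝ] ℝ := B.constr ℝ (fun j => wp j - wm j) with hℓdef
  have hℓ : ∀ j, ℓ (v j) = wp j - wm j := by
    intro j; rw [← hB, hℓdef]; exact B.constr_basis ℝ _ j
  set c : Fin d → ℝ := a + (1/2 : ℝ) • ∑ k, v k with hc
  have hμm' : ∀ j, μm j = c + (-(1/2) : ℝ) • v j := by
    intro j
    rw [hμm, Finset.sum_sdiff_eq_sub (Finset.subset_univ {j}), Finset.sum_singleton, hc]
    module
  have hμp' : ∀ j, μp j = c + ((1/2) : ℝ) • v j := by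
    intro j
    rw [hμp, Finset.sum_sdiff_eq_sub (Finset.subset_univ {j}), Finset.sum_singleton, hc]
    module
  set b : ℝ := T / 2 - ℓ c with hb
  refine ⟨fun x => ℓ x + b, ⟨⟨ℓ, b, fun x => rfl⟩, ?_⟩, ?_⟩
  · intro j
    have hwsum := h1 j
    constructor
    · dsimp only
      rw [hμm' j, map_add, map_smul, hℓ j, smul_eq_mul, hb]; linarith
    · dsimp only
      rw [hμp' j, map_add, map_smul, hℓ j, smul_eq_mul, hb]; linarith
  · rintro u ⟨⟨ℓ', b', hu⟩, hval⟩
    have hℓ' : ∀ j, ℓ' (v j) = wp j - wm j := by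
      intro j
      have h1' := (hval j).1
      have h2' := (hval j).2
      rw [hu, hμm' j, map_add, map_smul, smul_eq_mul] at h1'
      rw [hu, hμp' j, map_add, map_smul, smul_eq_mul] at h2'
      linarith
    have hℓeq : ℓ' = ℓ := by
      apply B.ext; intro j; rw [hB, hℓ, hℓ']
    have j0 : Fin d := ⟨0, hd⟩
    have hb' : b' = b := by
      have h1' := (hval j0).1
      rw [hu, hμm' j0, map_add, map_smul, hℓeq, hℓ j0, smul_eq_mul] at h1'
      have hw0 := h1 j0
      rw [hb]; linarith
    funext x
    rw [hu, hℓeq, hb']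
end

section
/- Let θ : ℝ → ℝ be defined by θ(t) = t² − (5/3)t⁴, and let P̂ be the real vector space of functions on ℝ² spanned by {1, x, y, θ(x) − θ(y)}. Then every φ ∈ P̂ satisfies the mean value property on each facet of the reference square (−1,1)²: φ(1,0) = (1/2)∫_{−1}^{1} φ(1,t) dt, φ(−1,0) = (1/2)∫_{−1}^{1} φ(−1,t) dt, φ(0,1) = (1/2)∫_{−1}^{1} φ(t,1) dt, and φ(0,−1) = (1/2)∫_{−1}^{1} φ(t,−1) dt. -/
lemma dssy_int (p q r : ℝ) :
    ∫ t in (-1 : ℝ)..1, (p + q * t + r * (t ^ 2 - 5 / 3 * t ^ 4)) = 2 * p := by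
  have h : ∀ x ∈ Set.uIcc (-1 : ℝ) 1,
      HasDerivAt (fun t : ℝ => p * t + q * t ^ 2 / 2 + r * (t ^ 3 / 3 - t ^ 5 / 3))
        (p + q * x + r * (x ^ 2 - 5 / 3 * x ^ 4)) x := by
    intro x _
    have h2 : HasDerivAt (fun t : ℝ => p * t + q * t ^ 2 / 2 + r * (t ^ 3 / 3 - t ^ 5 / 3))
        (p * 1 + q * (↑2 * x ^ 1) / 2 + r * ((↑3 * x ^ 2) / 3 - (↑5 * x ^ 4) / 3)) x :=
      (((hasDerivAt_id x).const_mul p).add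
        (((hasDerivAt_pow 2 x).const_mul q).div_const 2)).add
        ((((hasDerivAt_pow 3 x).div_const 3).sub ((hasDerivAt_pow 5 x).div_const 3)).const_mul r)
    convert h2 using 1
    ring
  rw [intervalIntegral.integral_eq_sub_of_hasDerivAt h (Continuous.intervalIntegrable (by continuity) (-1) 1)]
  ring

/-- Mean value property of the DSSY element with `θ(t) = t² - (5/3)t⁴`:
every function in `Span{1, x, y, θ(x) - θ(y)}` has its value at the midpoint
of each facet of the reference square `(-1,1)²` equal to its mean over that
facet. -/
theorem stmt_12 (θ : ℝ → ℝ) (hθ : ∀ t, θ t = t ^ 2 - (5 / 3) * t ^ 4)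
    (φ : ℝ × ℝ → ℝ)
    (hφ : φ ∈ Submodule.span ℝ
      ({fun _ => (1 : ℝ), fun p => p.1, fun p => p.2,
        fun p => θ p.1 - θ p.2} : Set (ℝ × ℝ → ℝ))) :
    φ (1, 0) = (1 / 2) * ∫ t in (-1 : ℝ)..1, φ (1, t) ∧
    φ (-1, 0) = (1 / 2) * ∫ t in (-1 : ℝ)..1, φ (-1, t) ∧
    φ (0, 1) = (1 / 2) * ∫ t in (-1 : ℝ)..1, φ (t, 1) ∧
    φ (0, -1) = (1 / 2) * ∫ t in (-1 : ℝ)..1, φ (t, -1) := by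
  rw [show ({fun _ => (1 : ℝ), fun p => p.1, fun p => p.2,
        fun p => θ p.1 - θ p.2} : Set (ℝ × ℝ → ℝ)) =
      insert (fun _ => (1 : ℝ)) (insert (fun p => p.1)
        (insert (fun p => p.2) {fun p => θ p.1 - θ p.2})) from rfl,
    Submodule.mem_span_insert] at hφ
  obtain ⟨a, z, hz, rfl⟩ := hφ
  rw [Submodule.mem_span_insert] at hz
  obtain ⟨b, w, hw, rfl⟩ := hz
  rw [Submodule.mem_span_insert] at hw
  obtain ⟨c, v, hv, rfl⟩ := hw
  rw [Submodule.mem_span_singleton] at hv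
  obtain ⟨d, rfl⟩ := hv
  simp only [Pi.add_apply, Pi.smul_apply, smul_eq_mul, hθ]
  refine ⟨?_, ?_, ?_, ?_⟩
  · rw [intervalIntegral.integral_congr
      (g := fun t => (a + b - 2 / 3 * d) + c * t + (-d) * (t ^ 2 - 5 / 3 * t ^ 4))
      (fun t _ => by ring), dssy_int]
    ring
  · rw [intervalIntegral.integral_congr
      (g := fun t => (a - b - 2 / 3 * d) + c * t + (-d) * (t ^ 2 - 5 / 3 * t ^ 4))
      (fun t _ => by ring), dssy_int]
    ring
  · rw [intervalIntegral.integral_congr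
      (g := fun t => (a + c + 2 / 3 * d) + b * t + d * (t ^ 2 - 5 / 3 * t ^ 4))
      (fun t _ => by ring), dssy_int]
    ring
  · rw [intervalIntegral.integral_congr
      (g := fun t => (a - c + 2 / 3 * d) + b * t + d * (t ^ 2 - 5 / 3 * t ^ 4))
      (fun t _ => by ring), dssy_int]
    ring
end

section
/- Let θ : ℝ → ℝ be defined by θ(t) = t² − (25/6)t⁴ + (7/2)t⁶, and let P̂ be the real vector space of functions on ℝ² spanned by {1, x, y, θ(x) − θ(y)}. Then every φ ∈ P̂ satisfies the mean value property on each facet of the reference square (−1,1)²: φ(1,0) = (1/2)∫_{−1}^{1} φ(1,t) dt, φ(−1,0) = (1/2)∫_{−1}^{1} φ(−1,t) dt, φ(0,1) = (1/2)∫_{−1}^{1} φ(t,1) dt, and φ(0,−1) = (1/2)∫_{−1}^{1} φ(t,−1) dt. -/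
open intervalIntegral MeasureTheory

/-- Mean value property of the DSSY element with `θ(t) = t² - (25/6)t⁴ + (7/2)t⁶`:
every function in `Span{1, x, y, θ(x) - θ(y)}` has its value at the midpoint
of each facet of the reference square `(-1,1)²` equal to its mean over that
facet. -/
theorem stmt_13 (θ : ℝ → ℝ) (hθ : ∀ t, θ t = t ^ 2 - (25 / 6) * t ^ 4 + (7 / 2) * t ^ 6)
    (φ : ℝ × ℝ → ℝ)
    (hφ : φ ∈ Submodule.span ℝ
      ({fun _ => (1 : ℝ), fun p => p.1, fun p => p.2,
        fun p => θ p.1 - θ p.2} : Set (ℝ × ℝ → ℝ))) :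
    φ (1, 0) = (1 / 2) * ∫ t in (-1 : ℝ)..1, φ (1, t) ∧
    φ (-1, 0) = (1 / 2) * ∫ t in (-1 : ℝ)..1, φ (-1, t) ∧
    φ (0, 1) = (1 / 2) * ∫ t in (-1 : ℝ)..1, φ (t, 1) ∧
    φ (0, -1) = (1 / 2) * ∫ t in (-1 : ℝ)..1, φ (t, -1) := by
  have hθfun : θ = fun t => t ^ 2 - (25 / 6) * t ^ 4 + (7 / 2) * t ^ 6 := funext hθ
  have hθc : Continuous θ := by
    rw [hθfun]
    exact ((continuous_pow 2).sub (continuous_const.mul (continuous_pow 4))).add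
      (continuous_const.mul (continuous_pow 6))
  have hθ0 : θ 0 = 0 := by rw [hθ]; norm_num
  have hθ1 : θ 1 = 1 / 3 := by rw [hθ]; norm_num
  have hθm1 : θ (-1) = 1 / 3 := by rw [hθ]; norm_num
  have c1 : IntervalIntegrable (fun t : ℝ => t ^ 2 - 25 / 6 * t ^ 4) MeasureTheory.volume (-1) 1 :=
    ((continuous_pow 2).sub (continuous_const.mul (continuous_pow 4))).intervalIntegrable _ _
  have c2 : IntervalIntegrable (fun t : ℝ => 7 / 2 * t ^ 6) MeasureTheory.volume (-1) 1 :=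
    (continuous_const.mul (continuous_pow 6)).intervalIntegrable _ _
  have c3 : IntervalIntegrable (fun t : ℝ => t ^ 2) MeasureTheory.volume (-1) 1 :=
    (continuous_pow 2).intervalIntegrable _ _
  have c4 : IntervalIntegrable (fun t : ℝ => 25 / 6 * t ^ 4) MeasureTheory.volume (-1) 1 :=
    (continuous_const.mul (continuous_pow 4)).intervalIntegrable _ _
  have hIθ : (∫ t in (-1 : ℝ)..1, θ t) = 0 := by
    simp_rw [hθfun]
    rw [intervalIntegral.integral_add c1 c2, intervalIntegral.integral_sub c3 c4,
      intervalIntegral.integral_const_mul, intervalIntegral.integral_const_mul,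
      integral_pow, integral_pow, integral_pow]
    norm_num
  set P : (ℝ × ℝ → ℝ) → Prop := fun f =>
    (Continuous fun t : ℝ => f (1, t)) ∧ (Continuous fun t : ℝ => f (-1, t)) ∧
    (Continuous fun t : ℝ => f (t, 1)) ∧ (Continuous fun t : ℝ => f (t, -1)) ∧
    (f (1, 0) = (1 / 2) * ∫ t in (-1 : ℝ)..1, f (1, t)) ∧
    (f (-1, 0) = (1 / 2) * ∫ t in (-1 : ℝ)..1, f (-1, t)) ∧
    (f (0, 1) = (1 / 2) * ∫ t in (-1 : ℝ)..1, f (t, 1)) ∧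
    (f (0, -1) = (1 / 2) * ∫ t in (-1 : ℝ)..1, f (t, -1)) with hP
  have key : P φ := by
    refine Submodule.span_induction (p := fun f _ => P f) ?_ ?_ ?_ ?_ hφ
    · intro f hf
      simp only [Set.mem_insert_iff, Set.mem_singleton_iff] at hf
      rcases hf with rfl | rfl | rfl | rfl
      · refine ⟨continuous_const, continuous_const, continuous_const, continuous_const, ?_, ?_, ?_, ?_⟩ <;>
          (rw [intervalIntegral.integral_const]; norm_num)
      · refine ⟨continuous_const, continuous_const, continuous_id, continuous_id, ?_, ?_, ?_, ?_⟩ <;>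
          simp only [intervalIntegral.integral_const, integral_id] <;> norm_num
      · refine ⟨continuous_id, continuous_id, continuous_const, continuous_const, ?_, ?_, ?_, ?_⟩ <;>
          simp only [intervalIntegral.integral_const, integral_id] <;> norm_num
      · refine ⟨?_, ?_, ?_, ?_, ?_, ?_, ?_, ?_⟩
        · show Continuous fun t : ℝ => θ 1 - θ t; exact continuous_const.sub hθc
        · show Continuous fun t : ℝ => θ (-1) - θ t; exact continuous_const.sub hθc
        · show Continuous fun t : ℝ => θ t - θ 1; exact hθc.sub continuous_const
        · show Continuous fun t : ℝ => θ t - θ (-1); exact hθc.sub continuous_const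
        · show θ 1 - θ 0 = 1 / 2 * ∫ t in (-1 : ℝ)..1, θ 1 - θ t
          rw [intervalIntegral.integral_sub intervalIntegrable_const
            (hθc.intervalIntegrable _ _), hIθ, intervalIntegral.integral_const]
          rw [hθ0, hθ1]; norm_num
        · show θ (-1) - θ 0 = 1 / 2 * ∫ t in (-1 : ℝ)..1, θ (-1) - θ t
          rw [intervalIntegral.integral_sub intervalIntegrable_const
            (hθc.intervalIntegrable _ _), hIθ, intervalIntegral.integral_const]
          rw [hθ0, hθm1]; norm_num
        · show θ 0 - θ 1 = 1 / 2 * ∫ t in (-1 : ℝ)..1, θ t - θ 1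
          rw [intervalIntegral.integral_sub (hθc.intervalIntegrable _ _)
            intervalIntegrable_const, hIθ, intervalIntegral.integral_const]
          rw [hθ0, hθ1]; norm_num
        · show θ 0 - θ (-1) = 1 / 2 * ∫ t in (-1 : ℝ)..1, θ t - θ (-1)
          rw [intervalIntegral.integral_sub (hθc.intervalIntegrable _ _)
            intervalIntegrable_const, hIθ, intervalIntegral.integral_const]
          rw [hθ0, hθm1]; norm_num
    · refine ⟨continuous_const, continuous_const, continuous_const, continuous_const, ?_, ?_, ?_, ?_⟩ <;>
        simp
    · rintro f g _ _ ⟨hf1, hf2, hf3, hf4, ef1, ef2, ef3, ef4⟩ ⟨hg1, hg2, hg3, hg4, eg1, eg2, eg3, eg4⟩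
      refine ⟨hf1.add hg1, hf2.add hg2, hf3.add hg3, hf4.add hg4, ?_, ?_, ?_, ?_⟩ <;>
        simp only [Pi.add_apply]
      · rw [intervalIntegral.integral_add (hf1.intervalIntegrable _ _) (hg1.intervalIntegrable _ _),
          ef1, eg1]; ring
      · rw [intervalIntegral.integral_add (hf2.intervalIntegrable _ _) (hg2.intervalIntegrable _ _),
          ef2, eg2]; ring
      · rw [intervalIntegral.integral_add (hf3.intervalIntegrable _ _) (hg3.intervalIntegrable _ _),
          ef3, eg3]; ring
      · rw [intervalIntegral.integral_add (hf4.intervalIntegrable _ _) (hg4.intervalIntegrable _ _),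
          ef4, eg4]; ring
    · rintro a f _ ⟨hf1, hf2, hf3, hf4, ef1, ef2, ef3, ef4⟩
      refine ⟨continuous_const.mul hf1, continuous_const.mul hf2, continuous_const.mul hf3,
        continuous_const.mul hf4, ?_, ?_, ?_, ?_⟩ <;>
        simp only [Pi.smul_apply, smul_eq_mul]
      · rw [intervalIntegral.integral_const_mul, ef1]; ring
      · rw [intervalIntegral.integral_const_mul, ef2]; ring
      · rw [intervalIntegral.integral_const_mul, ef3]; ring
      · rw [intervalIntegral.integral_const_mul, ef4]; ring
  exact ⟨key.2.2.2.2.1, key.2.2.2.2.2.1, key.2.2.2.2.2.2.1, key.2.2.2.2.2.2.2⟩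
end

section
/- Let θ : ℝ → ℝ be defined by θ(t) = t² − (5/3)t⁴, and let P̂ be the real vector space of functions on ℝ³ spanned by {1, x₁, x₂, x₃, θ(x₁) − θ(x₃), θ(x₂) − θ(x₃)}. Then every φ ∈ P̂ satisfies the mean value property on each of the six facets of the reference cube (−1,1)³: for every j ∈ {1,2,3} and every s ∈ {+1,−1}, φ(s·e_j) = (1/4)∫_{(−1,1)²} φ(x) dσ(x), where the integral is taken over the facet {x ∈ [−1,1]³ : x_j = s} (i.e., over the two remaining coordinates ranging over (−1,1)²), e_j denotes the j-th standard basis vector, and s·e_j is the barycenter of that facet. -/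
open MeasureTheory Set

noncomputable section DSSYaux

/-- The reference square. -/
def Sface : Set (Fin 2 → ℝ) := Set.univ.pi fun _ : Fin 2 => Set.Ioo (-1 : ℝ) 1

lemma Sface_preimage :
    (MeasurableEquiv.piFinTwo fun _ => ℝ) ⁻¹'
      ((Set.Ioo (-1:ℝ) 1) ×ˢ (Set.Ioo (-1:ℝ) 1)) = Sface := by
  ext x
  simp [Sface, MeasurableEquiv.piFinTwo, Fin.forall_fin_two]

lemma integrableOn_Sface {g : (Fin 2 → ℝ) → ℝ} (hg : Continuous g) :
    IntegrableOn g Sface := by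
  have hK : IsCompact (Set.univ.pi fun _ : Fin 2 => Set.Icc (-1 : ℝ) 1) :=
    isCompact_univ_pi fun _ => isCompact_Icc
  refine (hg.continuousOn.integrableOn_compact hK).mono_set ?_
  exact Set.pi_mono fun i _ => Set.Ioo_subset_Icc_self

lemma key_mul (f g : ℝ → ℝ) :
    ∫ x in Sface, f (x 0) * g (x 1) =
      (∫ t in Set.Ioo (-1:ℝ) 1, f t) * (∫ t in Set.Ioo (-1:ℝ) 1, g t) := by
  have h := (volume_preserving_piFinTwo fun _ : Fin 2 => ℝ).setIntegral_preimage_emb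
    (MeasurableEquiv.measurableEmbedding _)
    (fun p : ℝ × ℝ => f p.1 * g p.2) ((Set.Ioo (-1:ℝ) 1) ×ˢ (Set.Ioo (-1:ℝ) 1))
  rw [Sface_preimage] at h
  calc ∫ x in Sface, f (x 0) * g (x 1)
      = ∫ p in (Set.Ioo (-1:ℝ) 1) ×ˢ (Set.Ioo (-1:ℝ) 1), f p.1 * g p.2 := h
    _ = _ := by rw [← setIntegral_prod_mul]; rfl

lemma int_one_Ioo : ∫ _t in Set.Ioo (-1:ℝ) 1, (1:ℝ) = 2 := by
  simp [Real.volume_Ioo]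
  norm_num

lemma int_id_Ioo : ∫ t in Set.Ioo (-1:ℝ) 1, t = 0 := by
  rw [← integral_Ioc_eq_integral_Ioo, ← intervalIntegral.integral_of_le (by norm_num : (-1:ℝ) ≤ 1)]
  simp

lemma int_theta_Ioo (θ : ℝ → ℝ) (hθ : ∀ t, θ t = t ^ 2 - (5 / 3) * t ^ 4) :
    ∫ t in Set.Ioo (-1:ℝ) 1, θ t = 0 := by
  rw [← integral_Ioc_eq_integral_Ioo, ← intervalIntegral.integral_of_le (by norm_num : (-1:ℝ) ≤ 1)]
  have : (fun t : ℝ => θ t) = fun t => t ^ 2 - (5/3) * t ^ 4 := funext hθ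
  rw [this, intervalIntegral.integral_sub (intervalIntegral.intervalIntegrable_pow 2)
    ((intervalIntegral.intervalIntegrable_pow 4).const_mul _),
    intervalIntegral.integral_const_mul, integral_pow, integral_pow]
  norm_num

lemma int_const_Sface (c : ℝ) : ∫ _x in Sface, c = 4 * c := by
  rw [setIntegral_const]
  have : volume Sface = 4 := by
    rw [Sface, volume_pi_pi]
    simp [Real.volume_Ioo]
    norm_num
  rw [measureReal_def, this]
  norm_num [ENNReal.toReal_ofNat, smul_eq_mul, mul_comm]

lemma int_f0 (f : ℝ → ℝ) :
    ∫ x in Sface, f (x 0) = 2 * ∫ t in Set.Ioo (-1:ℝ) 1, f t := by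
  have h := key_mul f (fun _ => 1)
  simp only [mul_one] at h
  rw [h, int_one_Ioo, mul_comm]

lemma int_f1 (f : ℝ → ℝ) :
    ∫ x in Sface, f (x 1) = 2 * ∫ t in Set.Ioo (-1:ℝ) 1, f t := by
  have h := key_mul (fun _ => 1) f
  simp only [one_mul] at h
  rw [h, int_one_Ioo]

end DSSYaux

/-- Mean value property of the three-dimensional DSSY element with
`θ(t) = t² - (5/3)t⁴`: every function in
`Span{1, x₁, x₂, x₃, θ(x₁) - θ(x₃), θ(x₂) - θ(x₃)}` has its value at the
barycenter `s • e_j` of each of the six facets of the reference cube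
`(-1,1)³` equal to its mean over that facet (a facet has area 4). Here
`j.insertNth s x` is the point of the facet `{x : x_j = s}` whose remaining
two coordinates are `x`. -/
theorem stmt_14 (θ : ℝ → ℝ) (hθ : ∀ t, θ t = t ^ 2 - (5 / 3) * t ^ 4)
    (φ : (Fin 3 → ℝ) → ℝ)
    (hφ : φ ∈ Submodule.span ℝ
      ({fun _ => (1 : ℝ), fun x => x 0, fun x => x 1, fun x => x 2,
        fun x => θ (x 0) - θ (x 2),
        fun x => θ (x 1) - θ (x 2)} : Set ((Fin 3 → ℝ) → ℝ))) :
    ∀ (j : Fin 3) (s : ℝ), s = 1 ∨ s = -1 →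
      φ (j.insertNth s 0)
        = (1 / 4) * ∫ x in Set.univ.pi fun _ : Fin 2 => Set.Ioo (-1 : ℝ) 1,
            φ (j.insertNth s x) := by
  have hθc : Continuous θ := by
    have : θ = fun t : ℝ => t ^ 2 - (5/3) * t ^ 4 := funext hθ
    rw [this]; fun_prop
  have hθ0 : θ 0 = 0 := by rw [hθ]; norm_num
  have hins : ∀ (j : Fin 3) (s : ℝ),
      Continuous fun x : Fin 2 → ℝ => (j.insertNth s x : Fin 3 → ℝ) := by
    intro j s
    refine continuous_pi fun k => ?_
    refine Fin.succAboveCases j ?_ ?_ k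
    · simp only [Fin.insertNth_apply_same]; exact continuous_const
    · intro i
      simp only [Fin.insertNth_apply_succAbove]
      exact continuous_apply i

  have Iθ := int_theta_Ioo θ hθ
  have hIθ0 : IntegrableOn (fun x : Fin 2 → ℝ => θ (x 0)) Sface :=
    integrableOn_Sface (hθc.comp (continuous_apply 0))
  have hIθ1 : IntegrableOn (fun x : Fin 2 → ℝ => θ (x 1)) Sface :=
    integrableOn_Sface (hθc.comp (continuous_apply 1))
  have hconst : ∀ c : ℝ, IntegrableOn (fun _ : Fin 2 → ℝ => c) Sface :=
    fun c => integrableOn_Sface continuous_const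
  have Eθ0 : ∫ x in Sface, θ (x 0) = 0 := by rw [int_f0 θ, Iθ]; ring
  have Eθ1 : ∫ x in Sface, θ (x 1) = 0 := by rw [int_f1 θ, Iθ]; ring
  have Ex0 : ∫ x in Sface, x 0 = 0 := by
    have h := int_f0 (fun t => t); rw [int_id_Ioo] at h; simpa using h
  have Ex1 : ∫ x in Sface, x 1 = 0 := by
    have h := int_f1 (fun t => t); rw [int_id_Ioo] at h; simpa using h
  have hIx0 : IntegrableOn (fun x : Fin 2 → ℝ => x 0) Sface :=
    integrableOn_Sface (continuous_apply 0)
  have hIx1 : IntegrableOn (fun x : Fin 2 → ℝ => x 1) Sface :=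
    integrableOn_Sface (continuous_apply 1)
  suffices h : Continuous φ ∧ ∀ (j : Fin 3) (s : ℝ), s = 1 ∨ s = -1 →
      φ (j.insertNth s 0) = (1 / 4) * ∫ x in Sface, φ (j.insertNth s x) by
    intro j s hs
    exact h.2 j s hs
  refine Submodule.span_induction
    (p := fun ψ _ => Continuous ψ ∧ ∀ (j : Fin 3) (s : ℝ), s = 1 ∨ s = -1 →
      ψ (j.insertNth s 0) = (1 / 4) * ∫ x in Sface, ψ (j.insertNth s x))
    ?_ ?_ ?_ ?_ hφ
  · -- generators
    intro ψ hmem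
    have hθs : ∀ s : ℝ, s = 1 ∨ s = -1 → θ s = -(2/3) := by
      rintro s (rfl | rfl) <;> rw [hθ] <;> norm_num
    simp only [Set.mem_insert_iff, Set.mem_singleton_iff] at hmem
    rcases hmem with rfl | rfl | rfl | rfl | rfl | rfl
    · refine ⟨continuous_const, fun j s hs => ?_⟩
      fin_cases j <;>
      · show (1:ℝ) = (1/4) * ∫ _x in Sface, (1:ℝ)
        rw [int_const_Sface]; norm_num
    · refine ⟨continuous_apply 0, fun j s hs => ?_⟩
      fin_cases j
      · show s = (1/4) * ∫ _x in Sface, s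
        rw [int_const_Sface]; ring
      · show (0:ℝ) = (1/4) * ∫ x in Sface, x 0
        rw [Ex0]; ring
      · show (0:ℝ) = (1/4) * ∫ x in Sface, x 0
        rw [Ex0]; ring
    · refine ⟨continuous_apply 1, fun j s hs => ?_⟩
      fin_cases j
      · show (0:ℝ) = (1/4) * ∫ x in Sface, x 0
        rw [Ex0]; ring
      · show s = (1/4) * ∫ _x in Sface, s
        rw [int_const_Sface]; ring
      · show (0:ℝ) = (1/4) * ∫ x in Sface, x 1
        rw [Ex1]; ring
    · refine ⟨continuous_apply 2, fun j s hs => ?_⟩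
      fin_cases j
      · show (0:ℝ) = (1/4) * ∫ x in Sface, x 1
        rw [Ex1]; ring
      · show (0:ℝ) = (1/4) * ∫ x in Sface, x 1
        rw [Ex1]; ring
      · show s = (1/4) * ∫ _x in Sface, s
        rw [int_const_Sface]; ring
    · refine ⟨(hθc.comp (continuous_apply 0)).sub (hθc.comp (continuous_apply 2)),
        fun j s hs => ?_⟩
      fin_cases j
      · show θ s - θ 0 = (1/4) * ∫ x in Sface, (θ s - θ (x 1))
        rw [integral_sub (hconst _) hIθ1, int_const_Sface, Eθ1, hθ0]; ring
      · show θ 0 - θ 0 = (1/4) * ∫ x in Sface, (θ (x 0) - θ (x 1))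
        rw [integral_sub hIθ0 hIθ1, Eθ0, Eθ1]; ring
      · show θ 0 - θ s = (1/4) * ∫ x in Sface, (θ (x 0) - θ s)
        rw [integral_sub hIθ0 (hconst _), Eθ0, int_const_Sface, hθ0]; ring
    · refine ⟨(hθc.comp (continuous_apply 1)).sub (hθc.comp (continuous_apply 2)),
        fun j s hs => ?_⟩
      fin_cases j
      · show θ 0 - θ 0 = (1/4) * ∫ x in Sface, (θ (x 0) - θ (x 1))
        rw [integral_sub hIθ0 hIθ1, Eθ0, Eθ1]; ring
      · show θ s - θ 0 = (1/4) * ∫ x in Sface, (θ s - θ (x 1))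
        rw [integral_sub (hconst _) hIθ1, int_const_Sface, Eθ1, hθ0]; ring
      · show θ 0 - θ s = (1/4) * ∫ x in Sface, (θ (x 1) - θ s)
        rw [integral_sub hIθ1 (hconst _), Eθ1, int_const_Sface, hθ0]; ring
  · -- zero
    refine ⟨continuous_const, fun j s hs => ?_⟩
    show (0:ℝ) = (1/4) * ∫ _x in Sface, (0:ℝ)
    simp
  · -- add
    rintro f g _ _ ⟨hfc, hf⟩ ⟨hgc, hg⟩
    refine ⟨hfc.add hgc, fun j s hs => ?_⟩
    have h1 : IntegrableOn (fun x : Fin 2 → ℝ => f (j.insertNth s x)) Sface :=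
      integrableOn_Sface (hfc.comp (hins j s))
    have h2 : IntegrableOn (fun x : Fin 2 → ℝ => g (j.insertNth s x)) Sface :=
      integrableOn_Sface (hgc.comp (hins j s))
    show f (j.insertNth s 0) + g (j.insertNth s 0)
      = (1/4) * ∫ x in Sface, (f (j.insertNth s x) + g (j.insertNth s x))
    rw [integral_add h1 h2, hf j s hs, hg j s hs]; ring
  · -- smul
    rintro a f _ ⟨hfc, hf⟩
    refine ⟨hfc.const_smul a, fun j s hs => ?_⟩
    show a • f (j.insertNth s 0) = (1/4) * ∫ x in Sface, a • f (j.insertNth s x)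
    rw [integral_smul, hf j s hs, smul_eq_mul, smul_eq_mul]; ring
end
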